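/- arXiv:2110.01853 — 5 statements merged into one kernel-verified Lean document; each statement's English description precedes it below -/
import Mathlib

section
/- For the Rescaled Pólya urn with β ∈ [0,1) and |B_0| = α/(1−β), the predictive means satisfy, for every n ≥ 1, ψ_n − ψ_{n−1} = −ε(β)(ψ_{n−1} − p) + δ(β)(ξ_n − ψ_{n−1}), where ε(β) = |b|(1−β)²/(α + |b|(1−β)) and δ(β) = α(1−β)/(α + |b|(1−β)). -/
/-- For the Rescaled Pólya urn with β ∈ [0,1) and `|B_0| = α/(1−β)`, the
predictive means satisfy, for every n ≥ 1,
`ψ_n − ψ_{n−1} = −ε(β)(ψ_{n−1} − p) + δ(β)(ξ_n − ψ_{n−1})`, where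
`ε(β) = |b|(1−β)²/(α + |b|(1−β))` and `δ(β) = α(1−β)/(α + |b|(1−β))`. -/
theorem rescaled_polya_psi_dynamics_const
    (k : ℕ) (hk : 2 ≤ k) (α β : ℝ) (hα : 0 < α) (hβ : 0 ≤ β) (hβ1 : β < 1)
    (b B0 : Fin k → ℝ)
    (hb : ∀ i, 0 ≤ b i) (hB0nn : ∀ i, 0 ≤ B0 i) (hpos : ∀ i, 0 < b i + B0 i)
    (hbsum : 0 < ∑ i, b i)
    (hconst : (∑ i, B0 i) = α / (1 - β))
    (p : Fin k → ℝ) (hp : ∀ i, p i = b i / (∑ j, b j))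
    (ξ : ℕ → Fin k → ℝ)
    (hξ : ∀ n, 1 ≤ n → ∃ j : Fin k, ξ n = fun i => if i = j then (1 : ℝ) else 0)
    (B : ℕ → Fin k → ℝ)
    (hB0 : B 0 = B0)
    (hBrec : ∀ n, B (n + 1) = fun i => β * B n i + α * ξ (n + 1) i)
    (ψ : ℕ → Fin k → ℝ)
    (hψ : ∀ n i, ψ n i = (b i + B n i) / (∑ j, (b j + B n j))) :
    ∀ n, 1 ≤ n → ∀ i, ψ n i - ψ (n - 1) i =
      -((∑ j, b j) * (1 - β) ^ 2 / (α + (∑ j, b j) * (1 - β))) * (ψ (n - 1) i - p i)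
        + (α * (1 - β) / (α + (∑ j, b j) * (1 - β))) * (ξ n i - ψ (n - 1) i) := by
  have hβ' : (0:ℝ) < 1 - β := by linarith
  -- the total mass of B n is constant
  have hBsum : ∀ n, (∑ i, B n i) = α / (1 - β) := by
    intro n
    induction n with
    | zero => rw [hB0]; exact hconst
    | succ m ih =>
      obtain ⟨j, hj⟩ := hξ (m + 1) (Nat.le_add_left 1 m)
      have hxsum : (∑ i, ξ (m + 1) i) = 1 := by
        rw [hj]; simp
      rw [hBrec m]
      simp only
      rw [Finset.sum_add_distrib, ← Finset.mul_sum, ← Finset.mul_sum, ih, hxsum]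
      field_simp
      ring
  set S := ∑ j, b j with hS
  have hr : ∀ n, (∑ j, (b j + B n j)) = S + α / (1 - β) := by
    intro n
    rw [Finset.sum_add_distrib, hBsum]
  have hrpos : (0:ℝ) < S + α / (1 - β) := by positivity
  have hden : α + S * (1 - β) = (1 - β) * (S + α / (1 - β)) := by
    field_simp; ring
  intro n hn i
  obtain ⟨m, rfl⟩ : ∃ m, n = m + 1 := ⟨n - 1, (Nat.succ_pred_eq_of_pos hn).symm⟩
  simp only [Nat.add_sub_cancel]
  have hψm : ψ m i = (b i + B m i) / (S + α / (1 - β)) := by rw [hψ, hr]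
  have hψm1 : ψ (m + 1) i = (b i + (β * B m i + α * ξ (m + 1) i)) / (S + α / (1 - β)) := by
    rw [hψ, hr, hBrec m]
  rw [hψm, hψm1, hp, hden, hS]
  have hr0 : (S + α / (1 - β)) ≠ 0 := ne_of_gt hrpos
  have hS0 : S ≠ 0 := ne_of_gt hbsum
  have h1b : (1 - β) ≠ 0 := ne_of_gt hβ'
  have hS0' : (∑ j, b j) ≠ 0 := ne_of_gt hbsum
  have hd0 : α + (∑ j, b j) * (1 - β) ≠ 0 := by positivity
  have hd1 : (∑ j, b j) * (1 - β) + α ≠ 0 := by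
    have : (∑ j, b j) * (1 - β) + α = α + (∑ j, b j) * (1 - β) := by ring
    rw [this]; exact hd0
  field_simp
  ring
end

section
/- Let x ∈ ℝ^k with x_i ≥ 0 for all i and Σ_{i=1}^k x_i = 1, and let Σ(x) be the k×k matrix defined by: Σ(x)_{ij} = 0 if x_i x_j = 0 or i < j; Σ(x)_{ii} = sqrt( x_i · (Σ_{l=i+1}^k x_l) / (Σ_{l=i}^k x_l) ) if x_i ≠ 0; and Σ(x)_{ij} = − x_i · sqrt( x_j / ( (Σ_{l=j}^k x_l)(Σ_{l=j+1}^k x_l) ) ) if i > j and x_i x_j ≠ 0. Then Σ(x) Σ(x)^⊤ = diag(x) − x x^⊤. -/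
open Finset

noncomputable def Rn {k : ℕ} (x : Fin k → ℝ) (n : ℕ) : ℝ :=
  ∑ j : Fin k, if n ≤ j.val then x j else 0

lemma Rn_eq_Ici {k : ℕ} (x : Fin k → ℝ) (i : Fin k) :
    Rn x i.val = ∑ l ∈ Finset.Ici i, x l := by
  rw [show (Finset.Ici i) = Finset.univ.filter (fun j => i.val ≤ j.val) from by
    ext j
    simp only [Finset.mem_Ici, Finset.mem_filter, Finset.mem_univ, true_and, Fin.le_def],
    Finset.sum_filter, Rn]

lemma Rn_succ_eq_Ioi {k : ℕ} (x : Fin k → ℝ) (i : Fin k) :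
    Rn x (i.val + 1) = ∑ l ∈ Finset.Ioi i, x l := by
  rw [show (Finset.Ioi i) = Finset.univ.filter (fun j => i.val + 1 ≤ j.val) from by
    ext j
    simp only [Finset.mem_Ioi, Finset.mem_filter, Finset.mem_univ, true_and, Fin.lt_def,
      Nat.succ_le_iff],
    Finset.sum_filter, Rn]

lemma Rn_step {k : ℕ} (x : Fin k → ℝ) (n : ℕ) :
    Rn x n = (if h : n < k then x ⟨n, h⟩ else 0) + Rn x (n + 1) := by
  have : Rn x n = ∑ j : Fin k,
      ((if j.val = n then x j else 0) + (if n + 1 ≤ j.val then x j else 0)) := by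
    apply Finset.sum_congr rfl
    intro j _
    split_ifs <;> simp_all <;> omega
  rw [this, Finset.sum_add_distrib]
  congr 1
  by_cases h : n < k
  · rw [dif_pos h]
    have : ∀ j : Fin k, (j.val = n) = (j = ⟨n, h⟩) := by
      intro j; simp [Fin.ext_iff]
    simp_rw [this]
    simp
  · rw [dif_neg h]
    apply Finset.sum_eq_zero
    intro j _
    rw [if_neg]
    omega

lemma Rn_anti {k : ℕ} (x : Fin k → ℝ) (hx : ∀ i, 0 ≤ x i) {m n : ℕ} (h : m ≤ n) :
    Rn x n ≤ Rn x m := by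
  apply Finset.sum_le_sum
  intro j _
  split_ifs with h1 h2 <;> first | rfl | omega | exact hx j | exact le_refl _

lemma Rn_nonneg {k : ℕ} (x : Fin k → ℝ) (hx : ∀ i, 0 ≤ x i) (n : ℕ) : 0 ≤ Rn x n := by
  apply Finset.sum_nonneg
  intro j _
  split_ifs
  · exact hx j
  · exact le_refl _

lemma Rn_ge {k : ℕ} (x : Fin k → ℝ) (hx : ∀ i, 0 ≤ x i) (i : Fin k) {n : ℕ}
    (h : n ≤ i.val) : x i ≤ Rn x n := by
  refine le_trans ?_ (Rn_anti x hx h)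
  rw [Rn_eq_Ici]
  exact Finset.single_le_sum (fun j _ => hx j) (Finset.mem_Ici.mpr (le_refl i))

lemma Rn_zero {k : ℕ} (x : Fin k → ℝ) (hxs : ∑ i, x i = 1) : Rn x 0 = 1 := by
  rw [Rn]; simpa using hxs

lemma sum_Iio_fin {k : ℕ} (g : ℕ → ℝ) (i : Fin k) :
    ∑ j ∈ Finset.Iio i, g j.val = ∑ n ∈ Finset.range i.val, g n := by
  apply Finset.sum_nbij' (fun j => j.val) (fun n => if h : n < k then (⟨n, h⟩ : Fin k) else i)
  · intro j hj
    simp only [Finset.mem_Iio, Fin.lt_def] at hj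
    simpa using hj
  · intro n hn
    simp only [Finset.mem_range] at hn
    have hnk : n < k := lt_trans hn i.isLt
    rw [dif_pos hnk]
    simpa [Finset.mem_Iio, Fin.lt_def] using hn
  · intro j hj
    simp [j.isLt]
  · intro n hn
    simp only [Finset.mem_range] at hn
    have hnk : n < k := lt_trans hn i.isLt
    rw [dif_pos hnk]
  · intro j _
    rfl

lemma tele {k : ℕ} (x : Fin k → ℝ) (hx : ∀ i, 0 ≤ x i) (i : Fin k) (hi : 0 < x i) :
    ∑ n ∈ Finset.range i.val,
      (if h : n < k then x ⟨n, h⟩ else 0) / (Rn x n * Rn x (n + 1))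
      = 1 / Rn x i.val - 1 / Rn x 0 := by
  rw [← Finset.sum_range_sub (fun n => 1 / Rn x n) i.val]
  apply Finset.sum_congr rfl
  intro n hn
  rw [Finset.mem_range] at hn
  have hnk : n < k := lt_trans hn i.isLt
  rw [dif_pos hnk]
  have hR1 : 0 < Rn x (n + 1) := lt_of_lt_of_le hi (Rn_ge x hx i (by omega))
  have hsplit := Rn_step x n
  rw [dif_pos hnk] at hsplit
  by_cases hz : x ⟨n, hnk⟩ = 0
  · rw [hz, zero_add] at hsplit
    rw [hz, hsplit]
    simp
  · have hR0 : 0 < Rn x n := by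
      rw [hsplit]
      have := hx ⟨n, hnk⟩
      linarith
    field_simp
    linear_combination (-1 : ℝ) * hsplit



/-- For x in the simplex, the lower-triangular matrix Σ(x) described in the
paper satisfies `Σ(x) Σ(x)ᵀ = diag(x) − x xᵀ`. -/
theorem wf_sigma_mul_transpose
    (k : ℕ) (hk : 2 ≤ k) (x : Fin k → ℝ)
    (hx : ∀ i, 0 ≤ x i) (hxs : ∑ i, x i = 1)
    (S : Matrix (Fin k) (Fin k) ℝ)
    (hS0 : ∀ i j, (x i * x j = 0 ∨ i < j) → S i j = 0)
    (hSd : ∀ i, x i ≠ 0 →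
      S i i = Real.sqrt (x i * (∑ l ∈ Finset.Ioi i, x l) / (∑ l ∈ Finset.Ici i, x l)))
    (hSl : ∀ i j, j < i → x i * x j ≠ 0 →
      S i j = -(x i * Real.sqrt (x j /
        ((∑ l ∈ Finset.Ici j, x l) * (∑ l ∈ Finset.Ioi j, x l))))) :
    S * S.transpose = Matrix.diagonal x - Matrix.of (fun i j => x i * x j) := by
  have key : ∀ i i' : Fin k, i ≤ i' → ∑ j, S i j * S i' j
      = (if i = i' then x i else 0) - x i * x i' := by
    intro i i' hii
    by_cases hxi : x i = 0
    · have hz : ∀ j, S i j = 0 := fun j => hS0 i j (Or.inl (by rw [hxi, zero_mul]))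
      simp only [hz, zero_mul, Finset.sum_const_zero, hxi]
      split_ifs with h <;> ring
    by_cases hxi' : x i' = 0
    · have hz : ∀ j, S i' j = 0 := fun j => hS0 i' j (Or.inl (by rw [hxi', zero_mul]))
      simp only [hz, mul_zero, Finset.sum_const_zero, hxi']
      split_ifs with h
      · exact absurd (h ▸ hxi') hxi
      · ring
    -- both nonzero
    have hxipos : 0 < x i := lt_of_le_of_ne (hx i) (Ne.symm hxi)
    have hxi'pos : 0 < x i' := lt_of_le_of_ne (hx i') (Ne.symm hxi')
    have hRi : 0 < Rn x i.val := lt_of_lt_of_le hxipos (Rn_ge x hx i (le_refl _))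
    -- split the sum
    have hsplit : ∑ j, S i j * S i' j
        = (∑ j ∈ Finset.Iio i, S i j * S i' j) + (∑ j ∈ Finset.Ici i, S i j * S i' j) := by
      rw [← Finset.sum_union]
      · congr 1
        ext j
        simp only [Finset.mem_union, Finset.mem_Iio, Finset.mem_Ici, Finset.mem_univ, true_iff]
        exact lt_or_ge j i
      · rw [Finset.disjoint_left]
        intro j hj hj'
        simp only [Finset.mem_Iio] at hj
        simp only [Finset.mem_Ici] at hj'
        exact absurd hj (not_lt.mpr hj')
    -- upper part
    have hIci : ∑ j ∈ Finset.Ici i, S i j * S i' j = S i i * S i' i := by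
      rw [← Finset.Ioi_insert, Finset.sum_insert (Finset.notMem_Ioi_self)]
      have : ∑ j ∈ Finset.Ioi i, S i j * S i' j = 0 := by
        apply Finset.sum_eq_zero
        intro j hj
        rw [hS0 i j (Or.inr (Finset.mem_Ioi.mp hj)), zero_mul]
      rw [this, add_zero]
    -- lower part
    have hIio : ∑ j ∈ Finset.Iio i, S i j * S i' j
        = x i * x i' * (1 / Rn x i.val - 1) := by
      have step1 : ∀ j ∈ Finset.Iio i, S i j * S i' j
          = x i * x i' * ((if h : j.val < k then x ⟨j.val, h⟩ else 0)
              / (Rn x j.val * Rn x (j.val + 1))) := by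
        intro j hj
        rw [Finset.mem_Iio] at hj
        rw [dif_pos j.isLt]
        have hjj : (⟨j.val, j.isLt⟩ : Fin k) = j := rfl
        rw [hjj]
        by_cases hzj : x j = 0
        · rw [hS0 i j (Or.inl (by rw [hzj, mul_zero])), zero_mul, hzj, zero_div, mul_zero]
        · have hA : (0:ℝ) ≤ x j / ((∑ l ∈ Finset.Ici j, x l) * (∑ l ∈ Finset.Ioi j, x l)) := by
            apply div_nonneg (hx j)
            apply mul_nonneg <;> exact Finset.sum_nonneg (fun l _ => hx l)
          rw [hSl i j hj (mul_ne_zero hxi hzj),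
            hSl i' j (lt_of_lt_of_le hj hii) (mul_ne_zero hxi' hzj),
            Rn_eq_Ici, Rn_succ_eq_Ioi]
          rw [neg_mul_neg]
          rw [show x i * Real.sqrt (x j / ((∑ l ∈ Finset.Ici j, x l) * (∑ l ∈ Finset.Ioi j, x l)))
              * (x i' * Real.sqrt (x j / ((∑ l ∈ Finset.Ici j, x l) * (∑ l ∈ Finset.Ioi j, x l))))
              = x i * x i' * (Real.sqrt (x j / ((∑ l ∈ Finset.Ici j, x l) * (∑ l ∈ Finset.Ioi j, x l)))
                * Real.sqrt (x j / ((∑ l ∈ Finset.Ici j, x l) * (∑ l ∈ Finset.Ioi j, x l)))) from by ring,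
            Real.mul_self_sqrt hA]
      rw [Finset.sum_congr rfl step1, ← Finset.mul_sum]
      congr 1
      have := sum_Iio_fin (fun n => (if h : n < k then x ⟨n, h⟩ else 0)
          / (Rn x n * Rn x (n + 1))) i
      rw [this, tele x hx i hxipos, Rn_zero x hxs]
      norm_num
    rw [hsplit, hIio, hIci]
    -- diagonal/corner term
    rcases eq_or_lt_of_le hii with heq | hlt
    · subst heq
      have hTi : (0:ℝ) ≤ Rn x (i.val + 1) := Rn_nonneg x hx _
      rw [hSd i hxi, ← Rn_eq_Ici, ← Rn_succ_eq_Ioi,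
        Real.mul_self_sqrt (div_nonneg (mul_nonneg (hx i) hTi) (le_of_lt hRi))]
      have hstep := Rn_step x i.val
      rw [dif_pos i.isLt] at hstep
      have hjj : (⟨i.val, i.isLt⟩ : Fin k) = i := rfl
      rw [hjj] at hstep
      rw [if_pos rfl]
      have hne : x i + Rn x (i.val + 1) ≠ 0 := by rw [← hstep]; exact ne_of_gt hRi
      rw [hstep]
      field_simp
      ring
    · have hTi : 0 < Rn x (i.val + 1) :=
        lt_of_lt_of_le hxi'pos (Rn_ge x hx i' (by omega))
      have hSd' := hSd i hxi
      rw [← Rn_eq_Ici, ← Rn_succ_eq_Ioi] at hSd'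
      have hSl' := hSl i' i hlt (mul_ne_zero hxi' hxi)
      rw [← Rn_eq_Ici, ← Rn_succ_eq_Ioi] at hSl'
      have hsq : Real.sqrt (x i * Rn x (i.val + 1) / Rn x i.val)
          * Real.sqrt (x i / (Rn x i.val * Rn x (i.val + 1))) = x i / Rn x i.val := by
        rw [← Real.sqrt_mul (div_nonneg (mul_nonneg (hx i) (le_of_lt hTi)) (le_of_lt hRi))]
        rw [show x i * Rn x (i.val + 1) / Rn x i.val * (x i / (Rn x i.val * Rn x (i.val + 1)))
            = (x i / Rn x i.val) ^ 2 from by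
          field_simp]
        exact Real.sqrt_sq (div_nonneg (hx i) (le_of_lt hRi))
      rw [hSd', hSl', if_neg (ne_of_lt hlt)]
      rw [show Real.sqrt (x i * Rn x (↑i + 1) / Rn x ↑i)
          * -(x i' * Real.sqrt (x i / (Rn x ↑i * Rn x (↑i + 1))))
          = -(x i' * (Real.sqrt (x i * Rn x (i.val + 1) / Rn x i.val)
            * Real.sqrt (x i / (Rn x i.val * Rn x (i.val + 1))))) from by ring, hsq]
      ring
  ext i i'
  rw [Matrix.mul_apply]
  simp only [Matrix.transpose_apply, Matrix.sub_apply, Matrix.diagonal_apply, Matrix.of_apply]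
  rcases le_total i i' with h | h
  · exact key i i' h
  · have := key i' i h
    rw [show ∑ j, S i j * S i' j = ∑ j, S i' j * S i j from by
      apply Finset.sum_congr rfl; intro j _; ring, this]
    by_cases he : i = i'
    · subst he; ring
    · rw [if_neg he, if_neg (fun hh => he hh.symm)]
      ring
end

section
/- Let x ∈ ℝ^k with x_i ≥ 0 for all i and Σ_{i=1}^k x_i = 1, and let Σ(x) be the k×k matrix defined by: Σ(x)_{ij} = 0 if x_i x_j = 0 or i < j; Σ(x)_{ii} = sqrt( x_i · (Σ_{l=i+1}^k x_l) / (Σ_{l=i}^k x_l) ) if x_i ≠ 0; and Σ(x)_{ij} = − x_i · sqrt( x_j / ( (Σ_{l=j}^k x_l)(Σ_{l=j+1}^k x_l) ) ) if i > j and x_i x_j ≠ 0. Then 1^⊤ Σ(x) = 0^⊤, i.e. every column of Σ(x) sums to zero. -/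
/-- For x in the simplex, the lower-triangular matrix Σ(x) described in the
paper satisfies `1ᵀ Σ(x) = 0ᵀ`, i.e. every column of Σ(x) sums to zero. -/
theorem wf_sigma_columns_sum_zero
    (k : ℕ) (hk : 2 ≤ k) (x : Fin k → ℝ)
    (hx : ∀ i, 0 ≤ x i) (hxs : ∑ i, x i = 1)
    (S : Matrix (Fin k) (Fin k) ℝ)
    (hS0 : ∀ i j, (x i * x j = 0 ∨ i < j) → S i j = 0)
    (hSd : ∀ i, x i ≠ 0 →
      S i i = Real.sqrt (x i * (∑ l ∈ Finset.Ioi i, x l) / (∑ l ∈ Finset.Ici i, x l)))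
    (hSl : ∀ i j, j < i → x i * x j ≠ 0 →
      S i j = -(x i * Real.sqrt (x j /
        ((∑ l ∈ Finset.Ici j, x l) * (∑ l ∈ Finset.Ioi j, x l))))) :
    ∀ j, ∑ i, S i j = 0 := by
  intro j
  by_cases hj : x j = 0
  · exact Finset.sum_eq_zero fun i _ => hS0 i j (Or.inl (by simp [hj]))
  · set A := ∑ l ∈ Finset.Ici j, x l with hAdef
    set B := ∑ l ∈ Finset.Ioi j, x l with hBdef
    have hA : 0 < A := by
      have hjA : j ∈ Finset.Ici j := Finset.mem_Ici.2 le_rfl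
      have := Finset.sum_le_sum_of_subset_of_nonneg
        (Finset.singleton_subset_iff.2 hjA) (fun i _ _ => hx i)
      simp only [Finset.sum_singleton] at this
      exact lt_of_lt_of_le (lt_of_le_of_ne (hx j) (Ne.symm hj)) this
    have hB : 0 ≤ B := Finset.sum_nonneg fun i _ => hx i
    have h1 : ∑ i, S i j = ∑ i ∈ Finset.Ici j, S i j := by
      refine (Finset.sum_subset (Finset.subset_univ _) fun i _ hi => ?_).symm
      exact hS0 i j (Or.inr (by simpa using hi))
    have h2 : (Finset.Ici j : Finset (Fin k)) = insert j (Finset.Ioi j) :=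
      (Finset.Ioi_insert j).symm
    have h3 : ∑ i ∈ Finset.Ioi j, S i j
        = -(B * Real.sqrt (x j / (A * B))) := by
      rw [hBdef, Finset.sum_mul, ← Finset.sum_neg_distrib]
      refine Finset.sum_congr rfl fun i hi => ?_
      by_cases hxi : x i = 0
      · simp [hS0 i j (Or.inl (by simp [hxi])), hxi]
      · rw [hSl i j (Finset.mem_Ioi.1 hi) (mul_ne_zero hxi hj)]
    rw [h1, h2, Finset.sum_insert (by simp), h3, hSd j hj, ← hAdef, ← hBdef]
    have key : Real.sqrt (x j * B / A) = B * Real.sqrt (x j / (A * B)) := by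
      rcases eq_or_lt_of_le hB with hB0 | hBpos
      · simp [← hB0]
      · have : x j * B / A = B ^ 2 * (x j / (A * B)) := by
          field_simp
        rw [this, Real.sqrt_mul (by positivity), Real.sqrt_sq hB]
    rw [key]; ring
end

section
/- For the Rescaled Pólya urn, for every n ≥ 0 one has E[ψ_{n+1} | F_n] = ψ_n − ((1−β)|b|/r*_{n+1}) (ψ_n − p); in particular the drift of the predictive mean process pulls it towards p. -/
open MeasureTheory

/-- Auxiliary: a bounded measurable function is integrable w.r.t. a finite measure. -/
lemma integrable_of_bdd {Ω : Type*} [MeasurableSpace Ω] (μ : Measure Ω) [IsFiniteMeasure μ]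
    {f : Ω → ℝ} (hf : Measurable f) (C : ℝ) (hC : ∀ ω, ‖f ω‖ ≤ C) :
    Integrable f μ :=
  ⟨hf.aestronglyMeasurable, HasFiniteIntegral.of_bounded (C := C) (ae_of_all _ hC)⟩

/-- For the Rescaled Pólya urn, for every n ≥ 0 one has
`E[ψ_{n+1} | F_n] = ψ_n − ((1−β)|b|/r*_{n+1})(ψ_n − p)`; in particular the drift of the
predictive mean process pulls it towards p. -/
theorem rescaled_polya_psi_conditional_drift
    {Ω : Type*} [m0 : MeasurableSpace Ω] (μ : Measure Ω) [IsProbabilityMeasure μ]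
    (k : ℕ) (hk : 2 ≤ k) (α β : ℝ) (hα : 0 < α) (hβ : 0 ≤ β)
    (b B0 : Fin k → ℝ)
    (hb : ∀ i, 0 ≤ b i) (hB0nn : ∀ i, 0 ≤ B0 i) (hpos : ∀ i, 0 < b i + B0 i)
    (hbsum : 0 < ∑ i, b i)
    (p : Fin k → ℝ) (hp : ∀ i, p i = b i / (∑ j, b j))
    (ξ : ℕ → Ω → Fin k → ℝ)
    (hξ : ∀ n ω, 1 ≤ n → ∃ j : Fin k, ξ n ω = fun i => if i = j then (1 : ℝ) else 0)
    (B : ℕ → Ω → Fin k → ℝ)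
    (hB0 : ∀ ω, B 0 ω = B0)
    (hBrec : ∀ n ω, B (n + 1) ω = fun i => β * B n ω i + α * ξ (n + 1) ω i)
    (r : ℕ → Ω → ℝ) (hr : ∀ n ω, r n ω = ∑ i, (b i + B n ω i))
    (ψ : ℕ → Ω → Fin k → ℝ)
    (hψ : ∀ n ω i, ψ n ω i = (b i + B n ω i) / r n ω)
    -- the filtration F_n = σ(ξ_1,…,ξ_n) (F_0 trivial), to which ξ is adapted
    (F : ℕ → MeasurableSpace Ω) (hF : ∀ n, F n ≤ m0) (hFmono : Monotone F)
    (hF0 : F 0 = ⊥)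
    (hadapted : ∀ n i, 1 ≤ n → Measurable[F n] (fun ω => ξ n ω i))
    -- P(ξ_{n+1} = e_i | F_n) = ψ_{n,i}
    (hcond : ∀ n (i : Fin k),
      μ[(fun ω => if ξ (n + 1) ω = (fun l => if l = i then (1 : ℝ) else 0)
          then (1 : ℝ) else 0) | F n]
        =ᵐ[μ] fun ω => ψ n ω i) :
    ∀ n (i : Fin k),
      μ[(fun ω => ψ (n + 1) ω i) | F n]
        =ᵐ[μ] fun ω => ψ n ω i - ((1 - β) * (∑ j, b j) / r (n + 1) ω) * (ψ n ω i - p i) := by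
  -- nonnegativity of the coordinates of ξ
  have hξnn : ∀ n ω i, 0 ≤ ξ (n + 1) ω i := by
    intro n ω i
    obtain ⟨j, hj⟩ := hξ (n + 1) ω (Nat.le_add_left 1 n)
    rw [hj]
    by_cases h : i = j <;> simp [h]
  -- nonnegativity of B
  have hBnn : ∀ n ω i, 0 ≤ B n ω i := by
    intro n
    induction n with
    | zero => intro ω i; rw [hB0]; exact hB0nn i
    | succ m ih =>
      intro ω i
      rw [hBrec]
      exact add_nonneg (mul_nonneg hβ (ih ω i)) (mul_nonneg hα.le (hξnn m ω i))
  -- lower bound on r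
  have hrge : ∀ n ω, (∑ j, b j) ≤ r n ω := by
    intro n ω
    rw [hr]
    exact Finset.sum_le_sum fun i _ => le_add_of_nonneg_right (hBnn n ω i)
  have hrpos : ∀ n ω, 0 < r n ω := fun n ω => lt_of_lt_of_le hbsum (hrge n ω)
  -- sum of ξ coordinates is 1
  have hξsum : ∀ n ω, ∑ i, ξ (n + 1) ω i = 1 := by
    intro n ω
    obtain ⟨j, hj⟩ := hξ (n + 1) ω (Nat.le_add_left 1 n)
    rw [hj]
    simp
  -- recursion for r
  have hrrec : ∀ n ω, r (n + 1) ω = β * r n ω + (1 - β) * (∑ j, b j) + α := by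
    intro n ω
    have h1 : ∑ x, (b x + B (n + 1) ω x) = ∑ x, b x + β * ∑ x, B n ω x + α := by
      simp only [hBrec]
      rw [Finset.sum_add_distrib, Finset.sum_add_distrib, ← Finset.mul_sum, ← Finset.mul_sum,
        hξsum n ω]
      ring
    rw [hr, hr, h1, Finset.sum_add_distrib]
    ring
  -- measurability of B w.r.t. the filtration
  have hBmeas : ∀ n i, Measurable[F n] fun ω => B n ω i := by
    intro n
    induction n with
    | zero =>
      intro i
      have : (fun ω => B 0 ω i) = fun _ => B0 i := funext fun ω => by rw [hB0]
      rw [this]; exact measurable_const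
    | succ m ih =>
      intro i
      have : (fun ω => B (m + 1) ω i) =
          fun ω => β * B m ω i + α * ξ (m + 1) ω i := funext fun ω => by rw [hBrec]
      rw [this]
      exact ((measurable_const.mul ((ih i).mono (hFmono (Nat.le_succ m)) le_rfl)).add
        (measurable_const.mul (hadapted (m + 1) i (Nat.le_add_left 1 m))))
  have hrmeas : ∀ n, Measurable[F n] fun ω => r n ω := by
    intro n
    have : (fun ω => r n ω) = fun ω => ∑ i, (b i + B n ω i) := funext fun ω => hr n ω
    rw [this]
    exact Finset.measurable_sum _ fun i _ => measurable_const.add (hBmeas n i)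
  intro n i
  set S : ℝ := ∑ j, b j with hS
  -- the F n-measurable pieces
  set g : Ω → ℝ := fun ω => (b i + β * B n ω i) / r (n + 1) ω with hg
  set c : Ω → ℝ := fun ω => α / r (n + 1) ω with hc
  -- r (n+1) is F n-measurable via the recursion
  have hr1meas : Measurable[F n] fun ω => r (n + 1) ω := by
    have : (fun ω => r (n + 1) ω) = fun ω => β * r n ω + (1 - β) * S + α :=
      funext fun ω => hrrec n ω
    rw [this]
    exact ((measurable_const.mul (hrmeas n)).add measurable_const).add measurable_const
  have hgmeas : Measurable[F n] g := (measurable_const.add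
    (measurable_const.mul (hBmeas n i))).div hr1meas
  have hcmeas : Measurable[F n] c := measurable_const.div hr1meas
  -- bounds
  have hr1pos : ∀ ω, 0 < r (n + 1) ω := hrpos (n + 1)
  have hgbd : ∀ ω, ‖g ω‖ ≤ 1 := by
    intro ω
    have h1 : 0 ≤ b i + β * B n ω i :=
      add_nonneg (hb i) (mul_nonneg hβ (hBnn n ω i))
    have h2 : b i + β * B n ω i ≤ r (n + 1) ω := by
      rw [hr]
      calc b i + β * B n ω i ≤ b i + B (n + 1) ω i := by
            rw [hBrec]
            exact add_le_add_right (le_add_of_nonneg_right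
              (mul_nonneg hα.le (hξnn n ω i))) _
        _ ≤ ∑ j, (b j + B (n + 1) ω j) :=
            Finset.single_le_sum (f := fun j => b j + B (n + 1) ω j)
              (fun j _ => add_nonneg (hb j) (hBnn (n + 1) ω j)) (Finset.mem_univ i)
    rw [Real.norm_eq_abs, abs_of_nonneg (div_nonneg h1 (hr1pos ω).le)]
    exact div_le_one_of_le₀ h2 (hr1pos ω).le
  have hcbd : ∀ ω, ‖c ω‖ ≤ α / S := by
    intro ω
    rw [Real.norm_eq_abs, abs_of_nonneg (div_nonneg hα.le (hr1pos ω).le)]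
    exact div_le_div_of_nonneg_left hα.le hbsum (hrge (n + 1) ω)
  -- the indicator in hcond is just the i-th coordinate of ξ
  have hIeq : (fun ω => if ξ (n + 1) ω = (fun l => if l = i then (1 : ℝ) else 0)
      then (1 : ℝ) else 0) = fun ω => ξ (n + 1) ω i := by
    funext ω
    obtain ⟨j, hj⟩ := hξ (n + 1) ω (Nat.le_add_left 1 n)
    rw [hj]
    by_cases h : j = i
    · subst h; simp
    · have hne : (fun l => if l = j then (1 : ℝ) else 0) ≠
          (fun l => if l = i then (1 : ℝ) else 0) := by
        intro heq
        have := congrFun heq i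
        simp [show i ≠ j from fun h' => h h'.symm] at this
      simp [hne, show i ≠ j from fun h' => h h'.symm]
  have hcondξ : μ[(fun ω => ξ (n + 1) ω i) | F n] =ᵐ[μ] fun ω => ψ n ω i := by
    rw [← hIeq]; exact hcond n i
  -- decompose ψ (n+1) _ i
  have hdecomp : (fun ω => ψ (n + 1) ω i) = g + fun ω => c ω * ξ (n + 1) ω i := by
    funext ω
    simp only [Pi.add_apply, hg, hc]
    rw [hψ, hBrec]
    field_simp
    ring
  -- integrability
  have hξint : Integrable (fun ω => ξ (n + 1) ω i) μ :=
    integrable_of_bdd μ ((hadapted (n + 1) i (Nat.le_add_left 1 n)).mono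
      (hF (n + 1)) le_rfl) 1 (by
        intro ω
        obtain ⟨j, hj⟩ := hξ (n + 1) ω (Nat.le_add_left 1 n)
        rw [hj]
        by_cases h : i = j <;> simp [h])
  have hgint : Integrable g μ :=
    integrable_of_bdd μ (hgmeas.mono (hF n) le_rfl) 1 hgbd
  have hcξint : Integrable (fun ω => c ω * ξ (n + 1) ω i) μ :=
    integrable_of_bdd μ ((hcmeas.mono (hF n) le_rfl).mul
      ((hadapted (n + 1) i (Nat.le_add_left 1 n)).mono (hF (n + 1)) le_rfl))
      (α / S) (by
        intro ω
        rw [norm_mul]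
        calc ‖c ω‖ * ‖ξ (n + 1) ω i‖ ≤ (α / S) * 1 := by
              apply mul_le_mul (hcbd ω) _ (norm_nonneg _) (div_nonneg hα.le hbsum.le)
              obtain ⟨j, hj⟩ := hξ (n + 1) ω (Nat.le_add_left 1 n)
              rw [hj]
              by_cases h : i = j <;> simp [h]
          _ = α / S := mul_one _)
  -- compute the conditional expectation
  have step1 : μ[(fun ω => ψ (n + 1) ω i) | F n] =ᵐ[μ]
      μ[g | F n] + μ[(fun ω => c ω * ξ (n + 1) ω i) | F n] := by
    rw [hdecomp]
    exact condExp_add hgint hcξint (F n)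
  have step2 : μ[g | F n] = g :=
    condExp_of_stronglyMeasurable (hF n) hgmeas.stronglyMeasurable hgint
  have step3 : μ[(fun ω => c ω * ξ (n + 1) ω i) | F n] =ᵐ[μ]
      c * μ[(fun ω => ξ (n + 1) ω i) | F n] :=
    condExp_stronglyMeasurable_mul_of_bound (hF n) hcmeas.stronglyMeasurable hξint
      (α / S) (ae_of_all _ hcbd)
  have step4 : c * μ[(fun ω => ξ (n + 1) ω i) | F n] =ᵐ[μ]
      fun ω => c ω * ψ n ω i := by
    filter_upwards [hcondξ] with ω hω
    simp only [Pi.mul_apply, hω]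
  refine step1.trans ?_
  have : μ[g | F n] + μ[(fun ω => c ω * ξ (n + 1) ω i) | F n] =ᵐ[μ]
      fun ω => g ω + c ω * ψ n ω i := by
    filter_upwards [step3.trans step4] with ω hω
    simp only [Pi.add_apply, step2, hω]
  refine this.trans (ae_of_all _ ?_)
  -- final pointwise algebra
  intro ω
  have hs := (hrpos n ω).ne'
  have ht := (hr1pos ω).ne'
  have hSne := hbsum.ne'
  have hψn : ψ n ω i = (b i + B n ω i) / r n ω := hψ n ω i
  have htrec := hrrec n ω
  simp only [hg, hc, hψn, hp i, ← hS]
  rw [htrec] at ht ⊢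
  field_simp
  ring
end

section
/- For the Rescaled Pólya urn with β ∈ [0,1) and |B_0| = α/(1−β), for every bounded measurable function f: ℝ^k → ℝ and every n ≥ 0, E[f(ψ_{n+1}) | F_n] = Σ_{i=1}^k ψ_{n,i} · f( ψ_n − ε(β)(ψ_n − p) + δ(β)(e_i − ψ_n) ), where ε(β) = |b|(1−β)²/(α + |b|(1−β)) and δ(β) = α(1−β)/(α + |b|(1−β)). -/
open MeasureTheory

private lemma polya_key_alg (α β s bl x e : ℝ) (hβ : 1 - β ≠ 0) (hs : s ≠ 0)
    (hd : α + s * (1 - β) ≠ 0) :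
    (bl + (β * x + α * e)) / (s + α / (1 - β)) =
      (bl + x) / (s + α / (1 - β))
        - (s * (1 - β) ^ 2 / (α + s * (1 - β))) * ((bl + x) / (s + α / (1 - β)) - bl / s)
        + (α * (1 - β) / (α + s * (1 - β))) * (e - (bl + x) / (s + α / (1 - β))) := by
  have hrval : s + α / (1 - β) = (α + s * (1 - β)) / (1 - β) := by field_simp; ring
  rw [hrval]
  field_simp
  ring

/-- For the Rescaled Pólya urn with β ∈ [0,1) and `|B_0| = α/(1−β)`, for every
bounded measurable `f : ℝ^k → ℝ` and every n ≥ 0,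
`E[f(ψ_{n+1}) | F_n] = Σ_{i=1}^k ψ_{n,i} f(ψ_n − ε(β)(ψ_n − p) + δ(β)(e_i − ψ_n))`, where
`ε(β) = |b|(1−β)²/(α + |b|(1−β))` and `δ(β) = α(1−β)/(α + |b|(1−β))`. -/
theorem rescaled_polya_psi_transition
    {Ω : Type*} [m0 : MeasurableSpace Ω] (μ : Measure Ω) [IsProbabilityMeasure μ]
    (k : ℕ) (hk : 2 ≤ k) (α β : ℝ) (hα : 0 < α) (hβ : 0 ≤ β) (hβ1 : β < 1)
    (b B0 : Fin k → ℝ)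
    (hb : ∀ i, 0 ≤ b i) (hB0nn : ∀ i, 0 ≤ B0 i) (hpos : ∀ i, 0 < b i + B0 i)
    (hbsum : 0 < ∑ i, b i)
    (hconst : (∑ i, B0 i) = α / (1 - β))
    (p : Fin k → ℝ) (hp : ∀ i, p i = b i / (∑ j, b j))
    (ξ : ℕ → Ω → Fin k → ℝ)
    (hξ : ∀ n ω, 1 ≤ n → ∃ j : Fin k, ξ n ω = fun i => if i = j then (1 : ℝ) else 0)
    (B : ℕ → Ω → Fin k → ℝ)
    (hB0 : ∀ ω, B 0 ω = B0)
    (hBrec : ∀ n ω, B (n + 1) ω = fun i => β * B n ω i + α * ξ (n + 1) ω i)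
    (ψ : ℕ → Ω → Fin k → ℝ)
    (hψ : ∀ n ω i, ψ n ω i = (b i + B n ω i) / (∑ j, (b j + B n ω j)))
    -- the filtration F_n = σ(ξ_1,…,ξ_n) (F_0 trivial), to which ξ is adapted
    (F : ℕ → MeasurableSpace Ω) (hF : ∀ n, F n ≤ m0) (hFmono : Monotone F)
    (hF0 : F 0 = ⊥)
    (hadapted : ∀ n i, 1 ≤ n → Measurable[F n] (fun ω => ξ n ω i))
    -- P(ξ_{n+1} = e_i | F_n) = ψ_{n,i}
    (hcond : ∀ n (i : Fin k),
      μ[(fun ω => if ξ (n + 1) ω = (fun l => if l = i then (1 : ℝ) else 0)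
          then (1 : ℝ) else 0) | F n]
        =ᵐ[μ] fun ω => ψ n ω i) :
    ∀ (f : (Fin k → ℝ) → ℝ), Measurable f → (∃ C, ∀ x, |f x| ≤ C) →
      ∀ n, μ[(fun ω => f (ψ (n + 1) ω)) | F n]
        =ᵐ[μ] fun ω => ∑ i : Fin k, ψ n ω i *
          f (fun l =>
            ψ n ω l
              - ((∑ j, b j) * (1 - β) ^ 2 / (α + (∑ j, b j) * (1 - β))) * (ψ n ω l - p l)
              + (α * (1 - β) / (α + (∑ j, b j) * (1 - β)))
                  * ((if l = i then (1 : ℝ) else 0) - ψ n ω l)) := by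
  intro f hfmeas ⟨C, hC⟩ n
  set s : ℝ := ∑ j, b j with hs_def
  have h1β : (0:ℝ) < 1 - β := by linarith
  have h1β' : (1:ℝ) - β ≠ 0 := ne_of_gt h1β
  have hs0 : s ≠ 0 := ne_of_gt hbsum
  have hd : α + s * (1 - β) ≠ 0 := by positivity
  -- invariance of the total mass
  have hsumB : ∀ m ω, ∑ j, B m ω j = α / (1 - β) := by
    intro m
    induction m with
    | zero => intro ω; rw [hB0 ω]; exact hconst
    | succ m ih =>
      intro ω
      obtain ⟨j, hj⟩ := hξ (m + 1) ω (Nat.le_add_left 1 m)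
      have hsum1 : ∑ i, ξ (m + 1) ω i = 1 := by
        rw [hj]
        simp
      simp only [hBrec m ω]
      rw [Finset.sum_add_distrib, ← Finset.mul_sum, ← Finset.mul_sum, ih ω, hsum1]
      field_simp
      ring
  have hN : ∀ m ω, ∑ j, (b j + B m ω j) = s + α / (1 - β) := by
    intro m ω
    rw [Finset.sum_add_distrib, hsumB m ω]
  -- measurability of B and ψ w.r.t. the filtration
  have hBmeas : ∀ m i, Measurable[F m] (fun ω => B m ω i) := by
    intro m
    induction m with
    | zero =>
      intro i
      have : (fun ω => B 0 ω i) = fun _ => B0 i := by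
        funext ω; rw [hB0 ω]
      rw [this]; exact measurable_const
    | succ m ih =>
      intro i
      have : (fun ω => B (m + 1) ω i) =
          fun ω => β * B m ω i + α * ξ (m + 1) ω i := by
        funext ω; rw [hBrec m ω]
      rw [this]
      exact ((measurable_const.mul ((ih i).mono (hFmono (Nat.le_succ m)) le_rfl)).add
        (measurable_const.mul (hadapted (m + 1) i (Nat.le_add_left 1 m))))
  have hψmeas : ∀ i, Measurable[F n] (fun ω => ψ n ω i) := by
    intro i
    have : (fun ω => ψ n ω i) = fun ω => (b i + B n ω i) / (s + α / (1 - β)) := by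
      funext ω; rw [hψ n ω i, hN n ω]
    rw [this]
    exact (measurable_const.add (hBmeas n i)).div_const _
  -- abbreviations
  set ε : ℝ := s * (1 - β) ^ 2 / (α + s * (1 - β)) with hε_def
  set δ : ℝ := α * (1 - β) / (α + s * (1 - β)) with hδ_def
  set g : Fin k → Ω → (Fin k → ℝ) := fun i ω l =>
    ψ n ω l - ε * (ψ n ω l - p l) + δ * ((if l = i then (1:ℝ) else 0) - ψ n ω l) with hg_def
  -- pointwise decomposition
  have hkey : ∀ ω (j : Fin k),
      ξ (n + 1) ω = (fun l => if l = j then (1:ℝ) else 0) → ψ (n + 1) ω = g j ω := by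
    intro ω j hj
    funext l
    have hBl : B (n + 1) ω l = β * B n ω l + α * (if l = j then (1:ℝ) else 0) := by
      rw [hBrec n ω]; simp only; rw [hj]
    have := polya_key_alg α β s (b l) (B n ω l) (if l = j then (1:ℝ) else 0) h1β' hs0 hd
    simp only [hg_def]
    rw [hψ (n + 1) ω l, hN (n + 1) ω, hBl, hψ n ω l, hN n ω, hp l, hε_def, hδ_def]
    exact this
  have heinj : ∀ i j : Fin k,
      ((fun l => if l = i then (1:ℝ) else 0) : Fin k → ℝ) =
        (fun l => if l = j then (1:ℝ) else 0) → i = j := by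
    intro i j h
    have := congrFun h i
    simp only [if_pos rfl] at this
    by_contra hne
    rw [if_neg hne] at this
    norm_num at this
  have hdecomp : (fun ω => f (ψ (n + 1) ω)) =
      fun ω => ∑ i : Fin k, f (g i ω) *
        (if ξ (n + 1) ω = (fun l => if l = i then (1:ℝ) else 0) then (1:ℝ) else 0) := by
    funext ω
    obtain ⟨j, hj⟩ := hξ (n + 1) ω (Nat.le_add_left 1 n)
    rw [Finset.sum_eq_single j]
    · rw [if_pos hj, mul_one, hkey ω j hj]
    · intro i _ hij
      rw [if_neg, mul_zero]
      intro h
      exact hij (heinj _ _ (h.symm.trans hj))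
    · intro h; exact absurd (Finset.mem_univ j) h
  -- measurability of the coefficients
  have hgmeas : ∀ i, Measurable[F n] (fun ω => f (g i ω)) := by
    intro i
    have hgm : Measurable[F n] (g i) := by
      letI : MeasurableSpace Ω := F n
      exact measurable_pi_lambda (g i) fun l =>
        ((hψmeas l).sub (((hψmeas l).sub measurable_const).const_mul ε)).add
          ((measurable_const.sub (hψmeas l)).const_mul δ)
    exact hfmeas.comp hgm
  -- measurability of the indicators
  have himeas : ∀ i, Measurable
      (fun ω => if ξ (n + 1) ω = (fun l => if l = i then (1:ℝ) else 0) then (1:ℝ) else 0) := by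
    intro i
    have hξm : Measurable (fun ω => ξ (n + 1) ω) := by
      apply measurable_pi_lambda
      intro l
      exact (hadapted (n + 1) l (Nat.le_add_left 1 n)).mono (hF (n + 1)) le_rfl
    exact Measurable.ite (hξm (measurableSet_singleton _)) measurable_const measurable_const
  -- integrability
  have hCnn : 0 ≤ C := le_trans (abs_nonneg _) (hC 0)
  have hint : ∀ i, Integrable (fun ω => f (g i ω) *
      (if ξ (n + 1) ω = (fun l => if l = i then (1:ℝ) else 0) then (1:ℝ) else 0)) μ := by
    intro i
    apply Integrable.mono' (integrable_const C)
    · exact (((hgmeas i).mono (hF n) le_rfl).mul (himeas i)).aestronglyMeasurable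
    · filter_upwards with ω
      rw [norm_mul]
      calc ‖f (g i ω)‖ * ‖(if ξ (n + 1) ω = (fun l => if l = i then (1:ℝ) else 0)
            then (1:ℝ) else 0)‖ ≤ C * 1 := by
            apply mul_le_mul (hC _) _ (norm_nonneg _) hCnn
            split <;> simp
        _ = C := mul_one C
  have hintind : ∀ i : Fin k, Integrable
      (fun ω => if ξ (n + 1) ω = (fun l => if l = i then (1:ℝ) else 0)
        then (1:ℝ) else 0) μ := by
    intro i
    apply Integrable.mono' (integrable_const 1)
    · exact (himeas i).aestronglyMeasurable
    · filter_upwards with ω; split <;> simp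
  -- main computation
  have hfun : (fun ω => ∑ i : Fin k, f (g i ω) *
      (if ξ (n + 1) ω = (fun l => if l = i then (1:ℝ) else 0) then (1:ℝ) else 0)) =
      ∑ i : Fin k, (fun ω => f (g i ω) *
      (if ξ (n + 1) ω = (fun l => if l = i then (1:ℝ) else 0) then (1:ℝ) else 0)) := by
    funext ω; simp
  rw [hdecomp, hfun]
  have h1 := condExp_finsetSum (μ := μ) (m := F n) (s := Finset.univ)
    (f := fun i ω => f (g i ω) *
      (if ξ (n + 1) ω = (fun l => if l = i then (1:ℝ) else 0) then (1:ℝ) else 0))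
    (fun i _ => hint i)
  refine h1.trans ?_
  have h2 : ∀ i : Fin k,
      μ[(fun ω => f (g i ω) *
        (if ξ (n + 1) ω = (fun l => if l = i then (1:ℝ) else 0) then (1:ℝ) else 0)) | F n]
      =ᵐ[μ] fun ω => f (g i ω) * ψ n ω i := by
    intro i
    have := condExp_mul_of_stronglyMeasurable_left (μ := μ) (m := F n)
      (f := fun ω => f (g i ω))
      (g := fun ω => if ξ (n + 1) ω = (fun l => if l = i then (1:ℝ) else 0)
        then (1:ℝ) else 0)
      (hgmeas i).stronglyMeasurable (hint i) (hintind i)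
    refine this.trans ?_
    filter_upwards [hcond n i] with ω hω
    simp only [Pi.mul_apply, hω]
  have h3 : ∀ᵐ ω ∂μ, ∀ i : Fin k,
      (μ[(fun ω => f (g i ω) *
        (if ξ (n + 1) ω = (fun l => if l = i then (1:ℝ) else 0) then (1:ℝ) else 0)) | F n]) ω
      = f (g i ω) * ψ n ω i := by
    rw [MeasureTheory.ae_all_iff]
    exact h2
  filter_upwards [h3] with ω hω
  simp only [Finset.sum_apply]
  rw [Finset.sum_congr rfl fun i _ => hω i]
  exact Finset.sum_congr rfl fun i _ => mul_comm _ _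
end
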